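/- arXiv:1912.06483 — 3 statements merged into one kernel-verified Lean document; each statement's English description precedes it below -/
import Mathlib

section
/- Fix real numbers 1 < α < β and let K be the convex hull of {B̄_1, Ā_1, Ā_2, Ā_3, E_3}. There exists a constant c > 0, depending only on α and β, with the following property: for every δ > 0, every q₀ > 0 and every proper 4-system P = (P_1,…,P_4) on [q₀,∞), and every q ≥ q₀ such that q^{−1}P(q) ∈ K + [−δ,δ]^4, one has (i) −cδ ≤ κ_1(q) ≤ ((β−1)/(α−1))κ_2(q) + cδ and (ii) κ_3(q) ≤ ((α²−α)/(β−1))κ_1(q) + cδ, where κ_1(q) = (βP_1(q) − P_2(q))/q, κ_2(q) = (P_4(q) − P_2(q))/q and κ_3(q) = (P_4(q) − P_3(q))/q. -/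
open Set Filter

noncomputable section

/-- An `n`-system on the interval `I` (conditions (S1)–(S3)). -/
def IsNSystem (n : ℕ) (I : Set ℝ) (P : ℝ → Fin n → ℝ) : Prop :=
  ∀ q ∈ I,
    ((∀ i, 0 ≤ P q i) ∧ Monotone (P q) ∧ (∑ i, P q i) = q) ∧
    ∃ ε > 0, ∃ k ℓ : Fin n,
      (∀ t ∈ I ∩ Icc (q - ε) q, P t = P q + Pi.single ℓ (t - q)) ∧
      (∀ t ∈ I ∩ Icc q (q + ε), P t = P q + Pi.single k (t - q)) ∧
      (q ∈ interior I → ℓ < k → ∀ i, ℓ ≤ i → i ≤ k → P q i = P q ℓ)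

/-- `P` is proper: its first coordinate (equivalently, by (S1)/(G1), each of its
coordinates) tends to infinity with `q`. -/
def IsProper (n : ℕ) (P : ℝ → Fin n → ℝ) : Prop :=
  ∀ i : Fin n, Tendsto (fun q => P q i) atTop atTop

def ptA1 (α : ℝ) : Fin 4 → ℝ := ![1, 1, 1, α]
def ptA2 (α : ℝ) : Fin 4 → ℝ := ![1, 1, α, α]
def ptA3 (α : ℝ) : Fin 4 → ℝ := ![1, 1, α, α ^ 2]
def ptB1 (β : ℝ) : Fin 4 → ℝ := ![1, β, β, β]
noncomputable def ptE3 : Fin 4 → ℝ := ![0, 0, 1/2, 1/2]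

/-- `Ā₁ = A₁/|A₁|`, where `|X|` is the sum of the coordinates of `X`. -/
noncomputable def nA1 (α : ℝ) : Fin 4 → ℝ := (3 + α)⁻¹ • ptA1 α
noncomputable def nA2 (α : ℝ) : Fin 4 → ℝ := (2 + 2 * α)⁻¹ • ptA2 α
noncomputable def nA3 (α : ℝ) : Fin 4 → ℝ := (2 + α + α ^ 2)⁻¹ • ptA3 α
noncomputable def nB1 (β : ℝ) : Fin 4 → ℝ := (1 + 3 * β)⁻¹ • ptB1 β

/-- The convex hull `K` of `{B̄₁, Ā₁, Ā₂, Ā₃, E₃}`. -/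
noncomputable def Kbig (α β : ℝ) : Set (Fin 4 → ℝ) :=
  convexHull ℝ {nB1 β, nA1 α, nA2 α, nA3 α, ptE3}

lemma hullLe {s : Set (Fin 4 → ℝ)} {f : (Fin 4 → ℝ) → ℝ} (hf : IsLinearMap ℝ f)
    (h : ∀ x ∈ s, 0 ≤ f x) : ∀ x ∈ convexHull ℝ s, 0 ≤ f x :=
  fun x hx => convexHull_min h (convex_halfSpace_ge hf 0) hx

set_option maxHeartbeats 1000000 in
theorem stmt_15 (α β : ℝ) (hα : 1 < α) (hαβ : α < β) :
    ∃ c : ℝ, 0 < c ∧ ∀ δ : ℝ, 0 < δ → ∀ q₀ : ℝ, 0 < q₀ →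
      ∀ P : ℝ → Fin 4 → ℝ, IsNSystem 4 (Ici q₀) P → IsProper 4 P →
      ∀ q, q₀ ≤ q → (∃ y ∈ Kbig α β, ∀ i, |P q i / q - y i| ≤ δ) →
        (-(c * δ) ≤ (β * P q 0 - P q 1) / q ∧
         (β * P q 0 - P q 1) / q ≤
           (β - 1) / (α - 1) * ((P q 3 - P q 1) / q) + c * δ ∧
         (P q 3 - P q 2) / q ≤
           (α ^ 2 - α) / (β - 1) * ((β * P q 0 - P q 1) / q) + c * δ) := by
  have hα1 : (0:ℝ) < α - 1 := by linarith
  have hβ1 : (0:ℝ) < β - 1 := by linarith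
  set C2 : ℝ := (β - 1) / (α - 1) with hC2
  set C3 : ℝ := (α ^ 2 - α) / (β - 1) with hC3
  have hC2pos : 0 < C2 := div_pos hβ1 hα1
  have hC3pos : 0 < C3 := div_pos (by nlinarith) hβ1
  refine ⟨β + 3 + 2 * C2 + C3 * (β + 1), by nlinarith, ?_⟩
  intro δ hδ q₀ hq₀ P _ _ q hq ⟨y, hyK, hye⟩
  rw [Kbig] at hyK
  have hβ0 : (0:ℝ) ≤ β := by linarith
  have hf1 : IsLinearMap ℝ (fun y : Fin 4 → ℝ => β * y 0 - y 1) := by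
    constructor <;> intros <;> simp [Pi.add_apply, Pi.smul_apply, smul_eq_mul] <;> ring
  have hf2 : IsLinearMap ℝ (fun y : Fin 4 → ℝ => C2 * (y 3 - y 1) - (β * y 0 - y 1)) := by
    constructor <;> intros <;> simp [Pi.add_apply, Pi.smul_apply, smul_eq_mul] <;> ring
  have hf3 : IsLinearMap ℝ (fun y : Fin 4 → ℝ => C3 * (β * y 0 - y 1) - (y 3 - y 2)) := by
    constructor <;> intros <;> simp [Pi.add_apply, Pi.smul_apply, smul_eq_mul] <;> ring
  have hsA1 : (0:ℝ) ≤ (3 + α)⁻¹ := by positivity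
  have hsA2 : (0:ℝ) ≤ (2 + 2 * α)⁻¹ := by positivity
  have hsA3 : (0:ℝ) ≤ (2 + α + α ^ 2)⁻¹ := by positivity
  have hsB1 : (0:ℝ) ≤ (1 + 3 * β)⁻¹ := by positivity
  have key : ∀ {f : (Fin 4 → ℝ) → ℝ}, IsLinearMap ℝ f →
      0 ≤ f (ptB1 β) → 0 ≤ f (ptA1 α) → 0 ≤ f (ptA2 α) → 0 ≤ f (ptA3 α) → 0 ≤ f ptE3 →
      0 ≤ f y := by
    intro f hf h1 h2 h3 h4 h5
    refine hullLe hf ?_ y hyK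
    intro x hx
    simp only [Set.mem_insert_iff, Set.mem_singleton_iff] at hx
    rcases hx with rfl | rfl | rfl | rfl | rfl
    · rw [nB1, hf.map_smul, smul_eq_mul]; exact mul_nonneg hsB1 h1
    · rw [nA1, hf.map_smul, smul_eq_mul]; exact mul_nonneg hsA1 h2
    · rw [nA2, hf.map_smul, smul_eq_mul]; exact mul_nonneg hsA2 h3
    · rw [nA3, hf.map_smul, smul_eq_mul]; exact mul_nonneg hsA3 h4
    · exact h5
  have hC2α : C2 * (α ^ 2 - 1) = (β - 1) * (α + 1) := by
    rw [hC2]; field_simp; ring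
  have hC2α1 : C2 * (α - 1) = β - 1 := by
    rw [hC2]; field_simp
  have hC3β : C3 * (β - 1) = α ^ 2 - α := by
    rw [hC3]; field_simp
  have H1 : 0 ≤ β * y 0 - y 1 := by
    refine key hf1 ?_ ?_ ?_ ?_ ?_ <;>
        simp only [ptB1, ptA1, ptA2, ptA3, ptE3, Matrix.cons_val_zero, Matrix.cons_val_one,
          Matrix.head_cons]
    · linarith
    · linarith
    · linarith
    · linarith
    · linarith
  have H2 : 0 ≤ C2 * (y 3 - y 1) - (β * y 0 - y 1) := by
    refine key hf2 ?_ ?_ ?_ ?_ ?_ <;>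
        simp only [ptB1, ptA1, ptA2, ptA3, ptE3, Matrix.cons_val_zero, Matrix.cons_val_one,
          Matrix.head_cons, Matrix.cons_val_two, Matrix.cons_val_three, Matrix.tail_cons]
    · nlinarith [mul_pos hC2pos hβ1]
    · linarith [hC2α1]
    · linarith [hC2α1]
    · nlinarith [hC2α]
    · nlinarith [hC2pos]
  have H3 : 0 ≤ C3 * (β * y 0 - y 1) - (y 3 - y 2) := by
    refine key hf3 ?_ ?_ ?_ ?_ ?_ <;>
        simp only [ptB1, ptA1, ptA2, ptA3, ptE3, Matrix.cons_val_zero, Matrix.cons_val_one,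
          Matrix.head_cons, Matrix.cons_val_two, Matrix.cons_val_three, Matrix.tail_cons]
    · nlinarith
    · nlinarith [hC3β]
    · nlinarith [hC3β]
    · linarith [hC3β]
    · nlinarith
  have b0 := abs_le.1 (hye 0)
  have b1 := abs_le.1 (hye 1)
  have b2 := abs_le.1 (hye 2)
  have b3 := abs_le.1 (hye 3)
  have e1 : (β * P q 0 - P q 1) / q = β * (P q 0 / q) - P q 1 / q := by ring
  have e2 : (P q 3 - P q 1) / q = P q 3 / q - P q 1 / q := by ring
  have e3 : (P q 3 - P q 2) / q = P q 3 / q - P q 2 / q := by ring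
  rw [e1, e2, e3]
  have m0l : β * (-δ) ≤ β * (P q 0 / q - y 0) := mul_le_mul_of_nonneg_left b0.1 hβ0
  have m0u : β * (P q 0 / q - y 0) ≤ β * δ := mul_le_mul_of_nonneg_left b0.2 hβ0
  have m2l : C2 * (-δ) ≤ C2 * (P q 3 / q - y 3) := mul_le_mul_of_nonneg_left b3.1 hC2pos.le
  have m2u : C2 * (P q 1 / q - y 1) ≤ C2 * δ := mul_le_mul_of_nonneg_left b1.2 hC2pos.le
  have m3l : C3 * (β * (-δ) - δ) ≤ C3 * (β * (P q 0 / q - y 0) - (P q 1 / q - y 1)) :=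
    mul_le_mul_of_nonneg_left (by linarith) hC3pos.le
  have p1 : 0 < C2 * δ := mul_pos hC2pos hδ
  have p2 : 0 < C3 * δ := mul_pos hC3pos hδ
  have p3 : 0 < C3 * (β * δ) := mul_pos hC3pos (by nlinarith)
  have p4 : C3 * (β * (-δ) - δ) + C3 * (β + 1) * δ = 0 := by ring
  refine ⟨by nlinarith, by nlinarith, by nlinarith⟩
end
end

section
/- Fix real numbers 1 < α < β, let q₀ > 0 and let P = (P_1,…,P_4) be a proper 4-system on [q₀,∞), with κ_1(q) = (βP_1(q) − P_2(q))/q, κ_2(q) = (P_4(q) − P_2(q))/q, κ_3(q) = (P_4(q) − P_3(q))/q. Let q, r ∈ ℝ with r > q ≥ q₀. Then: (i) if P_1 is constant on [q,r], then κ_1(t) ≤ (q/t)κ_1(q) for each t ∈ [q,r]; (ii) if P_4 is constant on [q,r], then κ_3(t) ≤ (q/t)κ_3(q) for each t ∈ [q,r]; (iii) 0 ≤ κ_3(t) ≤ κ_2(t) for each t ≥ q₀. -/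
open Set Filter

noncomputable section

/-- A locally nondecreasing function on `Ici q₀` is nondecreasing. -/
lemma locMono_aux (q₀ : ℝ) (f : ℝ → ℝ)
    (hf : ∀ c ∈ Ici q₀, ∃ ε > (0:ℝ),
      (∀ t ∈ Ici q₀ ∩ Icc (c - ε) c, f t ≤ f c) ∧
      (∀ t ∈ Ici q₀ ∩ Icc c (c + ε), f c ≤ f t))
    {a b : ℝ} (ha : q₀ ≤ a) (hab : a ≤ b) : f a ≤ f b := by
  set S := {x | x ∈ Icc a b ∧ f a ≤ f x} with hS
  have haS : a ∈ S := ⟨⟨le_refl a, hab⟩, le_refl _⟩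
  have hbdd : BddAbove S := ⟨b, fun x hx => hx.1.2⟩
  have hne : S.Nonempty := ⟨a, haS⟩
  set c := sSup S with hc
  have hcb : c ≤ b := csSup_le hne (fun x hx => hx.1.2)
  have hac : a ≤ c := le_csSup hbdd haS
  have hcq₀ : q₀ ≤ c := ha.trans hac
  obtain ⟨ε, hε, hleft, hright⟩ := hf c hcq₀
  have hfc : f a ≤ f c := by
    obtain ⟨x, hxS, hx⟩ := exists_lt_of_lt_csSup hne (show c - ε < c by linarith)
    have hxc : x ≤ c := le_csSup hbdd hxS
    exact hxS.2.trans (hleft x ⟨ha.trans hxS.1.1, hx.le, hxc⟩)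
  rcases eq_or_lt_of_le hcb with h | h
  · rwa [h] at hfc
  · exfalso
    set t := min b (c + ε) with ht
    have htc : c < t := lt_min h (by linarith)
    have htS : t ∈ S := by
      refine ⟨⟨hac.trans htc.le, min_le_left _ _⟩, hfc.trans ?_⟩
      exact hright t ⟨hcq₀.trans htc.le, htc.le, min_le_right _ _⟩
    exact absurd (le_csSup hbdd htS) (not_le.mpr htc)

theorem stmt_16 (α β : ℝ) (hα : 1 < α) (hαβ : α < β) (q₀ : ℝ) (hq₀ : 0 < q₀)
    (P : ℝ → Fin 4 → ℝ) (hP : IsNSystem 4 (Ici q₀) P) (hprop : IsProper 4 P)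
    (q r : ℝ) (hq : q₀ ≤ q) (hr : q < r) :
    ((∀ t ∈ Icc q r, P t 0 = P q 0) → ∀ t ∈ Icc q r,
        (β * P t 0 - P t 1) / t ≤ q / t * ((β * P q 0 - P q 1) / q)) ∧
    ((∀ t ∈ Icc q r, P t 3 = P q 3) → ∀ t ∈ Icc q r,
        (P t 3 - P t 2) / t ≤ q / t * ((P q 3 - P q 2) / q)) ∧
    (∀ t, q₀ ≤ t →
        0 ≤ (P t 3 - P t 2) / t ∧ (P t 3 - P t 2) / t ≤ (P t 3 - P t 1) / t) := by
  -- each coordinate is nondecreasing on [q₀, ∞)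
  have hmono : ∀ i : Fin 4, ∀ a b : ℝ, q₀ ≤ a → a ≤ b → P a i ≤ P b i := by
    intro i a b ha hab
    refine locMono_aux q₀ (fun s => P s i) ?_ ha hab
    intro c hc
    obtain ⟨_, ε, hε, k, ℓ, hL, hR, _⟩ := hP c hc
    refine ⟨ε, hε, ?_, ?_⟩
    · intro t ht
      show P t i ≤ P c i
      rw [congrFun (hL t ht) i]
      have h1 : Pi.single (M := fun _ : Fin 4 => ℝ) ℓ (t - c) i ≤ 0 := by
        rcases eq_or_ne i ℓ with h | h
        · subst h; rw [Pi.single_eq_same]; linarith [ht.2.2]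
        · rw [Pi.single_eq_of_ne h]
      simpa using by linarith [h1]
    · intro t ht
      show P c i ≤ P t i
      rw [congrFun (hR t ht) i]
      have h1 : (0:ℝ) ≤ Pi.single (M := fun _ : Fin 4 => ℝ) k (t - c) i := by
        rcases eq_or_ne i k with h | h
        · subst h; rw [Pi.single_eq_same]; linarith [ht.2.1]
        · rw [Pi.single_eq_of_ne h]
      simpa using by linarith [h1]
  have hq0 : 0 < q := lt_of_lt_of_le hq₀ hq
  refine ⟨?_, ?_, ?_⟩
  · intro hconst t ht
    have htq₀ : q₀ ≤ t := hq.trans ht.1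
    have ht0 : 0 < t := lt_of_lt_of_le hq₀ htq₀
    have h0 : P t 0 = P q 0 := hconst t ht
    have h1 : P q 1 ≤ P t 1 := hmono 1 q t hq ht.1
    have : (β * P t 0 - P t 1) / t ≤ (β * P q 0 - P q 1) / t := by
      apply div_le_div_of_nonneg_right ?_ ht0.le |>.trans_eq rfl
      · rw [h0]; linarith
    calc (β * P t 0 - P t 1) / t ≤ (β * P q 0 - P q 1) / t := this
      _ = q / t * ((β * P q 0 - P q 1) / q) := by field_simp
  · intro hconst t ht
    have htq₀ : q₀ ≤ t := hq.trans ht.1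
    have ht0 : 0 < t := lt_of_lt_of_le hq₀ htq₀
    have h3 : P t 3 = P q 3 := hconst t ht
    have h2 : P q 2 ≤ P t 2 := hmono 2 q t hq ht.1
    calc (P t 3 - P t 2) / t ≤ (P q 3 - P q 2) / t := by
          apply div_le_div_of_nonneg_right ?_ ht0.le |>.trans_eq rfl
          linarith
      _ = q / t * ((P q 3 - P q 2) / q) := by field_simp
  · intro t ht
    have ht0 : 0 < t := lt_of_lt_of_le hq₀ ht
    have hmt := (hP t ht).1.2.1
    have h23 : P t 2 ≤ P t 3 := hmt (show (2:Fin 4) ≤ 3 by decide)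
    have h12 : P t 1 ≤ P t 2 := hmt (show (1:Fin 4) ≤ 2 by decide)
    constructor
    · exact div_nonneg (by linarith) ht0.le
    · apply div_le_div_of_nonneg_right ?_ ht0.le |>.trans_eq rfl
      linarith
end
end

section
/- Fix an integer n ≥ 2 and real numbers 0 < a < b, and for each positive integer k let P_k: [a,b] → ℝ^n be an n-system on [a,b]. Then some subsequence of (P_k)_{k≥1} converges uniformly on [a,b], and its limit is a continuous map f = (f_1,…,f_n): [a,b] → ℝ^n with the following properties: (i) each component f_j is 1-Lipschitz and monotone increasing; (ii) for each t ∈ [a,b], 0 ≤ f_1(t) ≤ ⋯ ≤ f_n(t) and f_1(t)+⋯+f_n(t) = t; (iii) if f_j < f_{j+1} on (a,b) for some j ∈ {1,…,n−1}, then f_1+⋯+f_j is convex on [a,b] and piecewise linear with slope 0 then slope 1 (i.e. there is c ∈ [a,b] such that f_1+⋯+f_j is constant on [a,c] and has slope 1 on [c,b]); (iv) if f_1(t) < f_2(t) < ⋯ < f_n(t) for all but finitely many t ∈ [a,b], then f is an n-system on [a,b]. -/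
open Set Filter

noncomputable section

lemma loc_mono {f : ℝ → ℝ} {s t : ℝ} (hst : s ≤ t)
    (h : ∀ q ∈ Icc s t, ∃ ε > 0,
      (∀ v, v ∈ Icc (q - ε) q → v ∈ Icc s t → f v ≤ f q) ∧
      (∀ v, v ∈ Icc q (q + ε) → v ∈ Icc s t → f q ≤ f v)) :
    f s ≤ f t := by
  set A : Set ℝ := {u | u ∈ Icc s t ∧ f s ≤ f u} with hA
  have hsA : s ∈ A := ⟨⟨le_refl s, hst⟩, le_refl _⟩
  have hne : A.Nonempty := ⟨s, hsA⟩
  have hbdd : BddAbove A := ⟨t, fun u hu => hu.1.2⟩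
  set w := sSup A with hw
  have hwt : w ≤ t := csSup_le hne (fun u hu => hu.1.2)
  have hsw : s ≤ w := le_csSup hbdd hsA
  obtain ⟨ε, hε, hleft, hright⟩ := h w ⟨hsw, hwt⟩
  have hfsw : f s ≤ f w := by
    obtain ⟨u, huA, hu⟩ := exists_lt_of_lt_csSup hne (by linarith : w - ε < w)
    have huw : u ≤ w := le_csSup hbdd huA
    exact huA.2.trans (hleft u ⟨hu.le, huw⟩ huA.1)
  rcases eq_or_lt_of_le hwt with he | hlt
  · exact he ▸ hfsw
  · exfalso
    set v := min (w + ε) t with hv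
    have hwv : w < v := lt_min (by linarith) hlt
    have hvA : v ∈ A := by
      refine ⟨⟨hsw.trans hwv.le, min_le_right _ _⟩,
        hfsw.trans (hright v ⟨hwv.le, min_le_left _ _⟩ ⟨hsw.trans hwv.le, min_le_right _ _⟩)⟩
    exact absurd (le_csSup hbdd hvA) (not_le.mpr hwv)

section Basics

variable {n : ℕ} {a b : ℝ} {P : ℝ → Fin n → ℝ}

lemma ns_monoOn (hP : IsNSystem n (Icc a b) P) (i : Fin n) :
    MonotoneOn (fun u => P u i) (Icc a b) := by
  intro x hx y hy hxy
  have hsub : Icc x y ⊆ Icc a b := Icc_subset_Icc hx.1 hy.2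
  refine loc_mono (f := fun u => P u i) hxy ?_
  intro q hq
  obtain ⟨-, ε, hε, k, l, hl, hr, -⟩ := hP q (hsub hq)
  refine ⟨ε, hε, ?_, ?_⟩
  · intro v hv hv'
    have h2 := congrFun (hl v ⟨hsub hv', hv⟩) i
    simp only [Pi.add_apply, Pi.single_apply] at h2
    have := hv.2
    simp only [h2]
    split_ifs at h2 ⊢ <;> linarith
  · intro v hv hv'
    have h2 := congrFun (hr v ⟨hsub hv', hv⟩) i
    simp only [Pi.add_apply, Pi.single_apply] at h2
    have := hv.1
    simp only [h2]
    split_ifs at h2 ⊢ <;> linarith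

lemma ns_revMonoOn (hP : IsNSystem n (Icc a b) P) (i : Fin n) :
    MonotoneOn (fun u => u - P u i) (Icc a b) := by
  intro x hx y hy hxy
  have hsub : Icc x y ⊆ Icc a b := Icc_subset_Icc hx.1 hy.2
  refine loc_mono (f := fun u => u - P u i) hxy ?_
  intro q hq
  obtain ⟨-, ε, hε, k, l, hl, hr, -⟩ := hP q (hsub hq)
  refine ⟨ε, hε, ?_, ?_⟩
  · intro v hv hv'
    have h2 := congrFun (hl v ⟨hsub hv', hv⟩) i
    simp only [Pi.add_apply, Pi.single_apply] at h2
    have := hv.2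
    simp only [h2]
    split_ifs at h2 ⊢ <;> linarith
  · intro v hv hv'
    have h2 := congrFun (hr v ⟨hsub hv', hv⟩) i
    simp only [Pi.add_apply, Pi.single_apply] at h2
    have := hv.1
    simp only [h2]
    split_ifs at h2 ⊢ <;> linarith

end Basics

section PartialSums

variable {n : ℕ} {a b : ℝ} {P : ℝ → Fin n → ℝ}

/-- Partial sum of the first `m` components. -/
def Ssum (P : ℝ → Fin n → ℝ) (m : ℕ) (u : ℝ) : ℝ :=
  ∑ i : Fin n, if (i : ℕ) < m then P u i else 0

lemma ns_mono' (hP : IsNSystem n (Icc a b) P) (i : Fin n) {x y : ℝ}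
    (hx : x ∈ Icc a b) (hy : y ∈ Icc a b) (hxy : x ≤ y) : P x i ≤ P y i :=
  ns_monoOn hP i hx hy hxy

lemma ns_rev' (hP : IsNSystem n (Icc a b) P) (i : Fin n) {x y : ℝ}
    (hx : x ∈ Icc a b) (hy : y ∈ Icc a b) (hxy : x ≤ y) : P y i ≤ P x i + (y - x) := by
  have h : x - P x i ≤ y - P y i := ns_revMonoOn hP i hx hy hxy
  linarith

lemma Ssum_single {m : ℕ} {w v c : ℝ} {k : Fin n} (h : P v = P w + Pi.single k c) :
    Ssum P m v = Ssum P m w + (if (k : ℕ) < m then c else 0) := by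
  have key : ∀ i : Fin n, (if (i : ℕ) < m then P v i else 0)
      = (if (i : ℕ) < m then P w i else 0)
        + (if i = k then (if (k : ℕ) < m then c else 0) else 0) := by
    intro i
    rw [h]
    simp only [Pi.add_apply, Pi.single_apply]
    rcases eq_or_ne i k with rfl | hik
    · split_ifs <;> simp
    · simp [hik]
  unfold Ssum
  rw [Finset.sum_congr rfl (fun i _ => key i), Finset.sum_add_distrib, Finset.sum_ite_eq']
  simp

lemma ns_S_monoOn (hP : IsNSystem n (Icc a b) P) (m : ℕ) {x y : ℝ}
    (hx : x ∈ Icc a b) (hy : y ∈ Icc a b) (hxy : x ≤ y) : Ssum P m x ≤ Ssum P m y := by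
  unfold Ssum
  apply Finset.sum_le_sum
  intro i _
  split_ifs
  · exact ns_mono' hP i hx hy hxy
  · exact le_refl 0

lemma ns_sum_eq (hP : IsNSystem n (Icc a b) P) {q : ℝ} (hq : q ∈ Icc a b) :
    ∑ i, P q i = q := (hP q hq).1.2.2

lemma ns_S_lip (hP : IsNSystem n (Icc a b) P) (m : ℕ) {x y : ℝ}
    (hx : x ∈ Icc a b) (hy : y ∈ Icc a b) (hxy : x ≤ y) :
    Ssum P m y ≤ Ssum P m x + (y - x) := by
  have h1 : ∑ i, (P y i - P x i) = y - x := by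
    rw [Finset.sum_sub_distrib, ns_sum_eq hP hy, ns_sum_eq hP hx]
  have h2 : Ssum P m y - Ssum P m x ≤ ∑ i, (P y i - P x i) := by
    unfold Ssum
    rw [← Finset.sum_sub_distrib]
    apply Finset.sum_le_sum
    intro i _
    have hm := ns_mono' hP i hx hy hxy
    split_ifs
    · exact le_refl _
    · simpa using hm
  linarith

lemma ns_propagate (hP : IsNSystem n (Icc a b) P) {j : ℕ} (hj : j + 1 < n)
    {s t : ℝ} (has : a ≤ s) (htb : t ≤ b)
    (hpos : ∀ u ∈ Icc s t, P u ⟨j, Nat.lt_of_succ_lt hj⟩ < P u ⟨j + 1, hj⟩)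
    {u : ℝ} (hu : u ∈ Ico s t)
    (hslope : ∃ ε > 0, ∀ v, v ∈ Icc u (u + ε) → v ∈ Icc s t →
      Ssum P (j + 1) v = Ssum P (j + 1) u + (v - u)) :
    ∀ v ∈ Icc u t, Ssum P (j + 1) v = Ssum P (j + 1) u + (v - u) := by
  set g := Ssum P (j + 1) with hg
  have hsub : Icc s t ⊆ Icc a b := Icc_subset_Icc has htb
  have gmono : ∀ x y : ℝ, x ∈ Icc s t → y ∈ Icc s t → x ≤ y → g x ≤ g y :=
    fun x y hx hy hxy => ns_S_monoOn hP _ (hsub hx) (hsub hy) hxy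
  have glip : ∀ x y : ℝ, x ∈ Icc s t → y ∈ Icc s t → x ≤ y → g y ≤ g x + (y - x) :=
    fun x y hx hy hxy => ns_S_lip hP _ (hsub hx) (hsub hy) hxy
  set A : Set ℝ := {v | v ∈ Icc u t ∧ g v = g u + (v - u)} with hA
  have huA : u ∈ A := ⟨⟨le_refl u, hu.2.le⟩, by ring⟩
  have hne : A.Nonempty := ⟨u, huA⟩
  have hbdd : BddAbove A := ⟨t, fun v hv => hv.1.2⟩
  set w := sSup A with hw
  have huw : u ≤ w := le_csSup hbdd huA
  have hwt : w ≤ t := csSup_le hne fun v hv => hv.1.2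
  have hust : u ∈ Icc s t := ⟨hu.1, hu.2.le⟩
  have hwst : w ∈ Icc s t := ⟨hu.1.trans huw, hwt⟩
  have hwA : g w = g u + (w - u) := by
    have h1 : g w ≤ g u + (w - u) := glip u w hust hwst huw
    have h2 : w ≤ (g w - g u) + u := by
      refine csSup_le hne ?_
      intro v hv
      have hvst : v ∈ Icc s t := ⟨hu.1.trans hv.1.1, hv.1.2⟩
      have h3 : g v ≤ g w := gmono v w hvst hwst (le_csSup hbdd hv)
      have h4 : g v = g u + (v - u) := hv.2
      linarith
    linarith
  have hIcc : ∀ v, v ∈ Icc u w → g v = g u + (v - u) := by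
    intro v hv
    have hvst : v ∈ Icc s t := ⟨hu.1.trans hv.1, hv.2.trans hwt⟩
    have h1 : g v ≤ g u + (v - u) := glip u v hust hvst hv.1
    have h2 : g w ≤ g v + (w - v) := glip v w hvst hwst hv.2
    linarith
  rcases eq_or_lt_of_le hwt with hwt' | hwlt
  · intro v hv
    exact hIcc v ⟨hv.1, hv.2.trans_eq hwt'.symm⟩
  · exfalso
    obtain ⟨-, ε, hε, k, l, hleft, hright, hS3⟩ := hP w (hsub hwst)
    by_cases hk : (k : ℕ) < j + 1
    · set v := min (w + ε) t with hv
      have hwv : w < v := lt_min (by linarith) hwlt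
      have hvst : v ∈ Icc s t := ⟨hwst.1.trans hwv.le, min_le_right _ _⟩
      have hPv := hright v ⟨hsub hvst, hwv.le, min_le_left _ _⟩
      have hgv := Ssum_single (m := j + 1) hPv
      rw [if_pos hk] at hgv
      rw [← hg] at hgv
      have hvA : v ∈ A := ⟨⟨huw.trans hwv.le, hvst.2⟩, by rw [hgv, hwA]; ring⟩
      exact absurd (le_csSup hbdd hvA) (not_le.mpr hwv)
    · rcases eq_or_lt_of_le huw with huw' | huwlt
      · obtain ⟨ε₀, hε₀, hsl⟩ := hslope
        set v := min (u + min ε₀ ε) t with hv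
        have hmin : (0:ℝ) < min ε₀ ε := lt_min hε₀ hε
        have huv : u < v := lt_min (by linarith) (huw' ▸ hwlt)
        have hvst : v ∈ Icc s t := ⟨hust.1.trans huv.le, min_le_right _ _⟩
        have h1 : g v = g u + (v - u) :=
          hsl v ⟨huv.le, (min_le_left _ _).trans (by linarith [min_le_left ε₀ ε])⟩ hvst
        have hPv := hright v ⟨hsub hvst, by
          constructor
          · rw [← huw']; exact huv.le
          · rw [← huw']
            exact (min_le_left _ _).trans (by linarith [min_le_right ε₀ ε])⟩
        have hgv := Ssum_single (m := j + 1) hPv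
        rw [if_neg hk] at hgv
        rw [← hg, ← huw'] at hgv
        rw [hgv] at h1
        have : v = u := by linarith
        exact absurd this (ne_of_gt huv)
      · set v := max u (w - ε) with hv
        have hvw : v < w := max_lt huwlt (by linarith)
        have hvA : g v = g u + (v - u) := hIcc v ⟨le_max_left _ _, hvw.le⟩
        have hvst : v ∈ Icc s t := ⟨hust.1.trans (le_max_left _ _), hvw.le.trans hwt⟩
        have hPv := hleft v ⟨hsub hvst, le_max_right _ _, hvw.le⟩
        have hgl := Ssum_single (m := j + 1) hPv
        rw [← hg] at hgl
        by_cases hl' : (l : ℕ) < j + 1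
        · have hl2 : (l : ℕ) ≤ j := Nat.lt_succ_iff.mp hl'
          have hk2 : j + 1 ≤ (k : ℕ) := not_lt.mp hk
          have hlk : l < k := Fin.lt_def.mpr (by omega)
          have hint : w ∈ interior (Icc a b) := by
            rw [interior_Icc]
            exact ⟨lt_of_le_of_lt (has.trans hust.1) huwlt, lt_of_lt_of_le hwlt htb⟩
          have e1 := hS3 hint hlk ⟨j, Nat.lt_of_succ_lt hj⟩
            (by rw [Fin.le_def]; show (l : ℕ) ≤ j; omega)
            (by rw [Fin.le_def]; show j ≤ (k : ℕ); omega)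
          have e2 := hS3 hint hlk ⟨j + 1, hj⟩
            (by rw [Fin.le_def]; show (l : ℕ) ≤ j + 1; omega)
            (by rw [Fin.le_def]; show j + 1 ≤ (k : ℕ); omega)
          have := hpos w hwst
          rw [e1, e2] at this
          exact lt_irrefl _ this
        · rw [if_neg hl'] at hgl
          rw [hgl, hwA] at hvA
          have : v = w := by linarith
          exact absurd this (ne_of_lt hvw)

lemma ns_max_id (hP : IsNSystem n (Icc a b) P) {j : ℕ} (hj : j + 1 < n)
    {s t : ℝ} (has : a ≤ s) (htb : t ≤ b) (hst : s ≤ t)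
    (hpos : ∀ u ∈ Icc s t, P u ⟨j, Nat.lt_of_succ_lt hj⟩ < P u ⟨j + 1, hj⟩) :
    ∀ u ∈ Icc s t, Ssum P (j + 1) u
      = max (Ssum P (j + 1) s) (Ssum P (j + 1) t - (t - u)) := by
  set g := Ssum P (j + 1) with hg
  have hsub : Icc s t ⊆ Icc a b := Icc_subset_Icc has htb
  have gmono : ∀ x y : ℝ, x ∈ Icc s t → y ∈ Icc s t → x ≤ y → g x ≤ g y :=
    fun x y hx hy hxy => ns_S_monoOn hP _ (hsub hx) (hsub hy) hxy
  have glip : ∀ x y : ℝ, x ∈ Icc s t → y ∈ Icc s t → x ≤ y → g y ≤ g x + (y - x) :=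
    fun x y hx hy hxy => ns_S_lip hP _ (hsub hx) (hsub hy) hxy
  set C : Set ℝ := {u | u ∈ Icc s t ∧ g u = g s} with hC
  have hsC : s ∈ C := ⟨⟨le_refl s, hst⟩, rfl⟩
  have hne : C.Nonempty := ⟨s, hsC⟩
  have hbdd : BddAbove C := ⟨t, fun u hu => hu.1.2⟩
  set c := sSup C with hc
  have hsc : s ≤ c := le_csSup hbdd hsC
  have hct : c ≤ t := csSup_le hne fun u hu => hu.1.2
  have hcst : c ∈ Icc s t := ⟨hsc, hct⟩
  have hsst : s ∈ Icc s t := ⟨le_refl s, hst⟩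
  have htst : t ∈ Icc s t := ⟨hst, le_refl t⟩
  have hgc : g c = g s := by
    have h1 : g s ≤ g c := gmono s c hsst hcst hsc
    have h2 : c ≤ (g c - g s) * 0 + c - (g c - g s) := by
      refine csSup_le hne ?_
      intro v hv
      have h3 : g c ≤ g v + (c - v) := glip v c hv.1 hcst (le_csSup hbdd hv)
      have h4 : g v = g s := hv.2
      linarith
    linarith
  have hconst : ∀ v ∈ Icc s c, g v = g s := by
    intro v hv
    have hvst : v ∈ Icc s t := ⟨hv.1, hv.2.trans hct⟩
    have h1 : g s ≤ g v := gmono s v hsst hvst hv.1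
    have h2 : g v ≤ g c := gmono v c hvst hcst hv.2
    linarith [hgc]
  have hR : ∀ v ∈ Icc c t, g v = g c + (v - c) := by
    rcases eq_or_lt_of_le hct with hct' | hclt
    · intro v hv
      have h1 : v = c := le_antisymm (hv.2.trans_eq hct'.symm) hv.1
      rw [h1]; ring
    · obtain ⟨-, ε, hε, k, l, hleft, hright, -⟩ := hP c (hsub hcst)
      by_cases hk : (k : ℕ) < j + 1
      · refine ns_propagate hP hj has htb hpos ⟨hsc, hclt⟩ ⟨ε, hε, ?_⟩
        intro v hv hvst
        have hPv := hright v ⟨hsub hvst, hv⟩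
        have hgv := Ssum_single (m := j + 1) hPv
        rw [if_pos hk] at hgv
        rw [← hg] at hgv
        exact hgv
      · exfalso
        set v := min (c + ε) t with hv
        have hcv : c < v := lt_min (by linarith) hclt
        have hvst : v ∈ Icc s t := ⟨hsc.trans hcv.le, min_le_right _ _⟩
        have hPv := hright v ⟨hsub hvst, hcv.le, min_le_left _ _⟩
        have hgv := Ssum_single (m := j + 1) hPv
        rw [if_neg hk] at hgv
        rw [← hg] at hgv
        have hvC : v ∈ C := ⟨hvst, by rw [hgv, hgc]; ring⟩
        exact absurd (le_csSup hbdd hvC) (not_le.mpr hcv)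
  have hgt : g t = g s + (t - c) := by
    have := hR t ⟨hct, le_refl t⟩
    rw [hgc] at this
    linarith
  intro u hu
  rcases le_or_gt u c with huc | hcu
  · rw [hconst u ⟨hu.1, huc⟩, hgt, max_eq_left (by linarith)]
  · have h1 : g u = g s + (u - c) := by
      have := hR u ⟨hcu.le, hu.2⟩
      rw [hgc] at this
      linarith
    rw [h1, hgt, max_eq_right (by linarith)]
    ring

lemma ns_dist_le (hP : IsNSystem n (Icc a b) P) {x y : ℝ} (hx : x ∈ Icc a b)
    (hy : y ∈ Icc a b) : dist (P x) (P y) ≤ dist x y := by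
  refine (dist_pi_le_iff dist_nonneg).mpr ?_
  intro i
  rw [Real.dist_eq, Real.dist_eq]
  rcases le_total x y with h | h
  · have h1 := ns_mono' hP i hx hy h
    have h2 := ns_rev' hP i hx hy h
    have h3 : |x - y| = y - x := by rw [abs_of_nonpos (by linarith)]; ring
    rw [h3, abs_le]
    constructor <;> linarith
  · have h1 := ns_mono' hP i hy hx h
    have h2 := ns_rev' hP i hy hx h
    have h3 : |x - y| = x - y := abs_of_nonneg (by linarith)
    rw [h3, abs_le]
    constructor <;> linarith

lemma ns_mem_Icc (hP : IsNSystem n (Icc a b) P) {q : ℝ} (hq : q ∈ Icc a b)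
    (ha : 0 ≤ a) (i : Fin n) : P q i ∈ Icc (0 : ℝ) b := by
  obtain ⟨⟨h0, hmono, hsum⟩, -⟩ := hP q hq
  refine ⟨h0 i, ?_⟩
  have h := Finset.single_le_sum (f := fun i => P q i) (fun i _ => h0 i) (Finset.mem_univ i)
  rw [hsum] at h
  exact h.trans hq.2

end PartialSums

set_option synthInstance.maxHeartbeats 1000000 in
set_option maxHeartbeats 2000000 in
lemma ns_extract {n : ℕ} {a b : ℝ} (ha : 0 ≤ a) (hab : a < b)
    (P : ℕ → ℝ → Fin n → ℝ) (hP : ∀ k, IsNSystem n (Icc a b) (P k)) :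
    ∃ φ : ℕ → ℕ, StrictMono φ ∧ ∃ f : ℝ → Fin n → ℝ,
      TendstoUniformlyOn (fun k => P (φ k)) f atTop (Icc a b) ∧
      ContinuousOn f (Icc a b) := by
  haveI : CompactSpace ↥(Icc a b) := isCompact_iff_compactSpace.mp isCompact_Icc
  have hlip : ∀ k, LipschitzWith 1 (fun x : ↥(Icc a b) => P k x) := by
    intro k
    refine LipschitzWith.of_dist_le_mul ?_
    intro x y
    rw [NNReal.coe_one, one_mul, Subtype.dist_eq]
    exact ns_dist_le (hP k) x.2 y.2
  set Q : ℕ → (BoundedContinuousFunction ↥(Icc a b) (Fin n → ℝ)) := fun k =>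
    BoundedContinuousFunction.mkOfCompact ⟨fun x => P k x, (hlip k).continuous⟩ with hQ
  set A : Set (BoundedContinuousFunction ↥(Icc a b) (Fin n → ℝ)) := Set.range Q with hA2
  have hcomp : IsCompact (closure A) := by
    refine BoundedContinuousFunction.arzela_ascoli
      (Icc (fun _ => 0 : Fin n → ℝ) (fun _ => b)) isCompact_Icc A ?_ ?_
    · rintro f x ⟨k, rfl⟩
      have hm := fun i => ns_mem_Icc (hP k) x.2 ha i
      exact ⟨fun i => (hm i).1, fun i => (hm i).2⟩
    · refine Metric.equicontinuous_of_continuity_modulus (fun d => d) tendsto_id _ ?_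
      intro x y i
      obtain ⟨k, hk⟩ := i.2
      show dist (i.val x) (i.val y) ≤ dist x y
      rw [← hk]
      show dist (P k x) (P k y) ≤ dist x y
      rw [Subtype.dist_eq]
      exact ns_dist_le (hP k) x.2 y.2
  have hmem : ∀ k, Q k ∈ closure A := fun k => subset_closure ⟨k, rfl⟩
  obtain ⟨F0, hF0, φ, hφ, hconv⟩ := hcomp.isSeqCompact hmem
  refine ⟨φ, hφ, fun t => F0 (Set.projIcc a b hab.le t), ?_, ?_⟩
  · have h1 : TendstoUniformly (fun k => ((Q ∘ φ) k : ↥(Icc a b) → Fin n → ℝ)) (⇑F0) atTop :=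
      BoundedContinuousFunction.tendsto_iff_tendstoUniformly.mp hconv
    rw [Metric.tendstoUniformlyOn_iff]
    rw [Metric.tendstoUniformly_iff] at h1
    intro ε hε
    filter_upwards [h1 ε hε] with k hk x hx
    have h2 := hk ⟨x, hx⟩
    simpa [Set.projIcc_of_mem hab.le hx, hQ] using h2
  · exact (F0.continuous.comp continuous_projIcc).continuousOn

open Topology
section Generic

lemma Ssum_zero {n : ℕ} (f : ℝ → Fin n → ℝ) (u : ℝ) : Ssum f 0 u = 0 := by simp [Ssum]

lemma Ssum_all {n : ℕ} (f : ℝ → Fin n → ℝ) (u : ℝ) : Ssum f n u = ∑ i, f u i :=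
  Finset.sum_congr rfl fun i _ => if_pos i.isLt

lemma Ssum_succ {n : ℕ} (f : ℝ → Fin n → ℝ) {j : ℕ} (hj : j < n) (u : ℝ) :
    Ssum f (j + 1) u = Ssum f j u + f u ⟨j, hj⟩ := by
  unfold Ssum
  have key : ∀ i : Fin n, (if (i : ℕ) < j + 1 then f u i else 0)
      = (if (i : ℕ) < j then f u i else 0) + (if i = ⟨j, hj⟩ then f u i else 0) := by
    intro i
    rcases lt_trichotomy (i : ℕ) j with h | h | h
    · rw [if_pos (by omega), if_pos h, if_neg (fun he => by
        rw [Fin.ext_iff] at he; simp at he; omega)]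
      ring
    · rw [if_pos (by omega), if_neg (by omega), if_pos (Fin.ext_iff.mpr (by simpa using h))]
      ring
    · rw [if_neg (by omega), if_neg (by omega), if_neg (fun he => by
        rw [Fin.ext_iff] at he; simp at he; omega)]
      ring
  rw [Finset.sum_congr rfl (fun i _ => key i), Finset.sum_add_distrib, Finset.sum_ite_eq']
  simp

lemma S_mono_gen {n : ℕ} {f : ℝ → Fin n → ℝ} {a b : ℝ}
    (hmono : ∀ i, MonotoneOn (fun u => f u i) (Icc a b)) (m : ℕ) {x y : ℝ}
    (hx : x ∈ Icc a b) (hy : y ∈ Icc a b) (hxy : x ≤ y) : Ssum f m x ≤ Ssum f m y := by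
  unfold Ssum
  apply Finset.sum_le_sum
  intro i _
  split_ifs
  · exact hmono i hx hy hxy
  · exact le_refl 0

lemma S_lip_gen {n : ℕ} {f : ℝ → Fin n → ℝ} {a b : ℝ}
    (hmono : ∀ i, MonotoneOn (fun u => f u i) (Icc a b))
    (hsum : ∀ u ∈ Icc a b, ∑ i, f u i = u) (m : ℕ) {x y : ℝ}
    (hx : x ∈ Icc a b) (hy : y ∈ Icc a b) (hxy : x ≤ y) :
    Ssum f m y ≤ Ssum f m x + (y - x) := by
  have h1 : ∑ i, (f y i - f x i) = y - x := by
    rw [Finset.sum_sub_distrib, hsum y hy, hsum x hx]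
  have h2 : Ssum f m y - Ssum f m x ≤ ∑ i, (f y i - f x i) := by
    unfold Ssum
    rw [← Finset.sum_sub_distrib]
    apply Finset.sum_le_sum
    intro i _
    have hm : f x i ≤ f y i := hmono i hx hy hxy
    split_ifs
    · exact le_refl _
    · simpa using hm
  linarith

lemma S_cont_gen {n : ℕ} {f : ℝ → Fin n → ℝ} {s : Set ℝ} (hcont : ContinuousOn f s) (m : ℕ) :
    ContinuousOn (Ssum f m) s := by
  unfold Ssum
  apply continuousOn_finset_sum
  intro i _
  by_cases hc : (i : ℕ) < m
  · simp only [if_pos hc]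
    exact (continuous_apply i).comp_continuousOn hcont
  · simp only [if_neg hc]
    exact continuousOn_const

lemma S_tendsto {n : ℕ} {g : ℕ → ℝ → Fin n → ℝ} {f : ℝ → Fin n → ℝ} {x : ℝ}
    (h : ∀ i, Tendsto (fun k => g k x i) atTop (𝓝 (f x i))) (m : ℕ) :
    Tendsto (fun k => Ssum (g k) m x) atTop (𝓝 (Ssum f m x)) := by
  unfold Ssum
  apply tendsto_finset_sum
  intro i _
  by_cases hc : (i : ℕ) < m
  · simp only [if_pos hc]; exact h i
  · simp only [if_neg hc]; exact tendsto_const_nhds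

lemma ext_right {F : ℝ → ℝ} {s0 t0 : ℝ}
    (hcont : ContinuousWithinAt F (Icc s0 t0) s0)
    (hend : F t0 - (t0 - s0) ≤ F s0)
    (hid : ∀ s ∈ Ioo s0 t0, ∀ u ∈ Icc s t0, F u = max (F s) (F t0 - (t0 - u))) :
    ∀ u ∈ Icc s0 t0, F u = max (F s0) (F t0 - (t0 - u)) := by
  intro u hu
  rcases eq_or_lt_of_le hu.1 with he | hlt
  · rw [← he]
    exact (max_eq_left hend).symm
  · have hne : (𝓝[Ioo s0 u] s0).NeBot := by
      refine mem_closure_iff_nhdsWithin_neBot.mp ?_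
      rw [closure_Ioo (ne_of_lt hlt)]
      exact ⟨le_refl _, hlt.le⟩
    have hA : Tendsto F (𝓝[Ioo s0 u] s0) (𝓝 (F s0)) :=
      hcont.mono fun x hx => ⟨hx.1.le, hx.2.le.trans hu.2⟩
    have h1 : Tendsto (fun s => max (F s) (F t0 - (t0 - u))) (𝓝[Ioo s0 u] s0)
        (𝓝 (max (F s0) (F t0 - (t0 - u)))) := hA.max tendsto_const_nhds
    have h2 : ∀ᶠ s in 𝓝[Ioo s0 u] s0, max (F s) (F t0 - (t0 - u)) = F u := by
      filter_upwards [self_mem_nhdsWithin] with s hs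
      exact (hid s ⟨hs.1, hs.2.trans_le hu.2⟩ u ⟨hs.2.le, hu.2⟩).symm
    exact (tendsto_nhds_unique ((tendsto_congr' h2).mp h1) tendsto_const_nhds).symm

lemma ext_left {F : ℝ → ℝ} {s0 t0 : ℝ}
    (hcont : ContinuousWithinAt F (Icc s0 t0) t0)
    (hend : F s0 ≤ F t0)
    (hid : ∀ t ∈ Ioo s0 t0, ∀ u ∈ Icc s0 t, F u = max (F s0) (F t - (t - u))) :
    ∀ u ∈ Icc s0 t0, F u = max (F s0) (F t0 - (t0 - u)) := by
  intro u hu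
  rcases eq_or_lt_of_le hu.2 with he | hlt
  · rw [he]
    have harith : F t0 - (t0 - t0) = F t0 := by ring
    rw [harith, max_eq_right hend]
  · have hne : (𝓝[Ioo u t0] t0).NeBot := by
      refine mem_closure_iff_nhdsWithin_neBot.mp ?_
      rw [closure_Ioo (ne_of_lt hlt)]
      exact ⟨hlt.le, le_refl _⟩
    have hA : Tendsto F (𝓝[Ioo u t0] t0) (𝓝 (F t0)) :=
      hcont.mono fun x hx => ⟨hu.1.trans hx.1.le, hx.2.le⟩
    have hB : Tendsto (fun t : ℝ => t - u) (𝓝[Ioo u t0] t0) (𝓝 (t0 - u)) :=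
      ((continuous_id.sub continuous_const).tendsto t0).mono_left nhdsWithin_le_nhds
    have h1 : Tendsto (fun t => max (F s0) (F t - (t - u))) (𝓝[Ioo u t0] t0)
        (𝓝 (max (F s0) (F t0 - (t0 - u)))) := tendsto_const_nhds.max (hA.sub hB)
    have h2 : ∀ᶠ t in 𝓝[Ioo u t0] t0, max (F s0) (F t - (t - u)) = F u := by
      filter_upwards [self_mem_nhdsWithin] with t ht
      exact (hid t ⟨hu.1.trans_lt ht.1, ht.2⟩ u ⟨hu.1, ht.1.le⟩).symm
    exact (tendsto_nhds_unique ((tendsto_congr' h2).mp h1) tendsto_const_nhds).symm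

lemma max_no_drop {F : ℝ → ℝ} {s t q : ℝ}
    (hid : ∀ u ∈ Icc s t, F u = max (F s) (F t - (t - u)))
    {ε1 ε2 : ℝ} (h1 : 0 < ε1) (h2 : 0 < ε2) (hs1 : s ≤ q - ε1) (ht2 : q + ε2 ≤ t)
    (hF1 : F q = F (q - ε1) + ε1) (hF2 : F (q + ε2) = F q) : False := by
  have e1 := hid (q - ε1) ⟨hs1, by linarith⟩
  have e2 := hid q ⟨by linarith, by linarith⟩
  have e3 := hid (q + ε2) ⟨by linarith, ht2⟩
  have h4 : F s ≤ F (q - ε1) := by rw [e1]; exact le_max_left _ _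
  have h5 : F s < F q := by rw [hF1]; linarith
  have h6 : F q = F t - (t - q) := by
    rcases le_or_gt (F t - (t - q)) (F s) with h | h
    · rw [max_eq_left h] at e2
      exact absurd e2 (ne_of_gt h5)
    · rw [max_eq_right h.le] at e2
      exact e2
  have h7 : F t - (t - (q + ε2)) ≤ F (q + ε2) := by rw [e3]; exact le_max_right _ _
  rw [hF2, h6] at h7
  linarith

lemma pick_coord {n : ℕ} (hn : 1 ≤ n) {c : ℕ → ℝ} {δ : ℝ} (hδ : 0 < δ)
    (h0 : c 0 = 0) (hN : c n = δ) (hd : ∀ j, j ≤ n → c j = 0 ∨ c j = δ)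
    (hm : ∀ j, j + 1 ≤ n → c j ≤ c (j + 1)) :
    ∃ K, K < n ∧ (∀ j, j ≤ K → c j = 0) ∧ (∀ j, j ≤ n → K < j → c j = δ) := by
  classical
  have hex : ∃ m, c (m + 1) = δ := ⟨n - 1, by rwa [Nat.sub_add_cancel hn]⟩
  set K := Nat.find hex with hK
  have hKs : c (K + 1) = δ := Nat.find_spec hex
  have hKlt : K < n := by
    have := Nat.find_min' hex (show c (n - 1 + 1) = δ by rwa [Nat.sub_add_cancel hn])
    omega
  have hzero : ∀ j, j ≤ K → c j = 0 := by
    intro j hj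
    cases j with
    | zero => exact h0
    | succ m =>
      rcases hd (m + 1) (by omega) with h | h
      · exact h
      · exact absurd (Nat.find_min' hex h) (by omega)
  have hone : ∀ j, j ≤ n → K < j → c j = δ := by
    intro j
    induction j with
    | zero => intro _ h; omega
    | succ m ih =>
      intro hjn hKj
      rcases Nat.lt_or_ge K m with h | h
      · have hm' := hm m (by omega)
        have him := ih (by omega) h
        rcases hd (m + 1) hjn with h2 | h2
        · exfalso; rw [him, h2] at hm'; linarith
        · exact h2
      · have hKm : K = m := by omega
        rw [← hKm]; exact hKs
  exact ⟨K, hKlt, hzero, hone⟩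

end Generic

lemma avoid_right {E : Set ℝ} (hE : E.Finite) {q t0 : ℝ} (hq : q < t0) :
    ∃ ε > 0, q + ε ≤ t0 ∧ ∀ v, q < v → v ≤ q + ε → v ∉ E := by
  classical
  set T := hE.toFinset.filter (fun x => q < x) with hT
  by_cases hne : T.Nonempty
  · set m := T.min' hne with hm
    have hqm : q < m := (Finset.mem_filter.mp (T.min'_mem hne)).2
    refine ⟨min (t0 - q) ((m - q) / 2), lt_min (by linarith) (by linarith), ?_, ?_⟩
    · have := min_le_left (t0 - q) ((m - q) / 2); linarith
    · intro v hv1 hv2 hvE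
      have hvT : v ∈ T := Finset.mem_filter.mpr ⟨hE.mem_toFinset.mpr hvE, hv1⟩
      have := T.min'_le v hvT
      have := min_le_right (t0 - q) ((m - q) / 2)
      rw [← hm] at *
      linarith
  · refine ⟨t0 - q, by linarith, by linarith, ?_⟩
    intro v hv1 _ hvE
    exact hne ⟨v, Finset.mem_filter.mpr ⟨hE.mem_toFinset.mpr hvE, hv1⟩⟩

lemma avoid_left {E : Set ℝ} (hE : E.Finite) {s0 q : ℝ} (hq : s0 < q) :
    ∃ ε > 0, s0 ≤ q - ε ∧ ∀ v, q - ε ≤ v → v < q → v ∉ E := by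
  classical
  set T := hE.toFinset.filter (fun x => x < q) with hT
  by_cases hne : T.Nonempty
  · set m := T.max' hne with hm
    have hqm : m < q := (Finset.mem_filter.mp (T.max'_mem hne)).2
    refine ⟨min (q - s0) ((q - m) / 2), lt_min (by linarith) (by linarith), ?_, ?_⟩
    · have := min_le_left (q - s0) ((q - m) / 2); linarith
    · intro v hv1 hv2 hvE
      have hvT : v ∈ T := Finset.mem_filter.mpr ⟨hE.mem_toFinset.mpr hvE, hv2⟩
      have := T.le_max' v hvT
      have := min_le_right (q - s0) ((q - m) / 2)
      rw [← hm] at *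
      linarith
  · refine ⟨q - s0, by linarith, by linarith, ?_⟩
    intro v _ hv2 hvE
    exact hne ⟨v, Finset.mem_filter.mpr ⟨hE.mem_toFinset.mpr hvE, hv2⟩⟩

lemma assemble {n : ℕ} {f : ℝ → Fin n → ℝ} {q ε' : ℝ} (hε' : 0 < ε') {D : Set ℝ}
    {c : ℕ → ℝ} {K : ℕ} (hKn : K < n)
    (hK0 : ∀ j, j ≤ K → c j = 0) (hK1 : ∀ j, j ≤ n → K < j → c j = ε')
    (hval : ∀ j, j ≤ n → ∀ v ∈ D, Ssum f j v - Ssum f j q = (if c j = 0 then 0 else v - q)) :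
    ∀ v ∈ D, f v = f q + Pi.single (⟨K, hKn⟩ : Fin n) (v - q) := by
  intro v hv
  funext i
  have e1 := hval ((i : ℕ) + 1) i.isLt v hv
  have e2 := hval (i : ℕ) (le_of_lt i.isLt) v hv
  have hs1 := Ssum_succ f i.isLt v
  have hs2 := Ssum_succ f i.isLt q
  rw [Fin.eta] at hs1 hs2
  simp only [Pi.add_apply, Pi.single_apply]
  rcases lt_trichotomy ((i : ℕ)) K with h | h | h
  · have hc1 : c ((i : ℕ) + 1) = 0 := hK0 _ (by omega)
    have hc2 : c (i : ℕ) = 0 := hK0 _ (by omega)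
    rw [if_neg (fun he => by rw [Fin.ext_iff] at he; simp at he; omega)]
    rw [if_pos hc1] at e1
    rw [if_pos hc2] at e2
    linarith
  · have hc1 : c ((i : ℕ) + 1) = ε' := hK1 _ (by omega) (by omega)
    have hc2 : c (i : ℕ) = 0 := hK0 _ (by omega)
    rw [if_pos (by rw [Fin.ext_iff]; simpa using h)]
    rw [if_neg (by rw [hc1]; exact hε'.ne')] at e1
    rw [if_pos hc2] at e2
    linarith
  · have hc1 : c ((i : ℕ) + 1) = ε' := hK1 _ (by omega) (by omega)
    have hc2 : c (i : ℕ) = ε' := hK1 _ (by omega) (by omega)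
    rw [if_neg (fun he => by rw [Fin.ext_iff] at he; simp at he; omega)]
    rw [if_neg (by rw [hc1]; exact hε'.ne')] at e1
    rw [if_neg (by rw [hc2]; exact hε'.ne')] at e2
    linarith

lemma right_form {n : ℕ} (hn : 1 ≤ n) {a b : ℝ} {f : ℝ → Fin n → ℝ}
    (hcont : ContinuousOn f (Icc a b))
    (hmono : ∀ i, MonotoneOn (fun u => f u i) (Icc a b))
    (hsum : ∀ u ∈ Icc a b, ∑ i, f u i = u)
    (hcore : ∀ (j : ℕ) (hj : j + 1 < n), ∀ s t : ℝ, a ≤ s → s < t → t ≤ b →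
      (∀ u ∈ Icc s t, f u ⟨j, Nat.lt_of_succ_lt hj⟩ < f u ⟨j + 1, hj⟩) →
      ∀ u ∈ Icc s t, Ssum f (j + 1) u = max (Ssum f (j + 1) s) (Ssum f (j + 1) t - (t - u)))
    {E : Set ℝ} (hEfin : E.Finite)
    (hE : ∀ u ∈ Icc a b, u ∉ E → ∀ i i' : Fin n, i < i' → f u i < f u i')
    {q : ℝ} (haq : a ≤ q) (hqb : q < b) :
    ∃ ε > 0, q + ε ≤ b ∧ ∃ k : Fin n, ∀ v ∈ Icc q (q + ε), f v = f q + Pi.single k (v - q) := by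
  obtain ⟨ε, hε, hεb, hεE⟩ := avoid_right hEfin hqb
  have hqIcc : q ∈ Icc a b := ⟨haq, hqb.le⟩
  have hqε : q + ε ∈ Icc a b := ⟨by linarith, hεb⟩
  have hsub : Icc q (q + ε) ⊆ Icc a b := Icc_subset_Icc haq hεb
  have hident : ∀ j, j ≤ n → ∀ u ∈ Icc q (q + ε),
      Ssum f j u = max (Ssum f j q) (Ssum f j (q + ε) - (q + ε - u)) := by
    intro j hjn u hu
    rcases Nat.eq_zero_or_pos j with rfl | hj0
    · rw [Ssum_zero, Ssum_zero, Ssum_zero, max_eq_left (by linarith [hu.2])]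
    rcases eq_or_lt_of_le hjn with rfl | hjn'
    · have hid : ∀ v ∈ Icc a b, Ssum f j v = v := fun v hv => by
        rw [Ssum_all, hsum v hv]
      rw [hid u (hsub hu), hid q hqIcc, hid _ hqε, max_eq_right (by linarith [hu.1])]
      ring
    · obtain ⟨j', rfl⟩ : ∃ j', j = j' + 1 := ⟨j - 1, by omega⟩
      refine ext_right ?_ ?_ ?_ u hu
      · exact ((S_cont_gen hcont _) q hqIcc).mono hsub
      · have := S_lip_gen hmono hsum (j' + 1) hqIcc hqε (by linarith)
        linarith
      · intro s hs u' hu'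
        refine hcore j' hjn' s (q + ε) (by linarith [hs.1]) hs.2 hεb ?_ u' hu'
        intro v hv
        have hvab : v ∈ Icc a b := ⟨haq.trans (hs.1.le.trans hv.1), hv.2.trans hεb⟩
        exact hE v hvab (hεE v (lt_of_lt_of_le hs.1 hv.1) hv.2) _ _
          (by rw [Fin.lt_def]; simp)
  set Δ : ℕ → ℝ := fun j => Ssum f j (q + ε) - Ssum f j q with hΔdef
  have hΔ0 : ∀ j, 0 ≤ Δ j := fun j => by
    have := S_mono_gen hmono j hqIcc hqε (by linarith)
    simp only [hΔdef]; linarith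
  have hΔε : ∀ j, Δ j ≤ ε := fun j => by
    have := S_lip_gen hmono hsum j hqIcc hqε (by linarith)
    simp only [hΔdef]; linarith
  set ε' := min ε (Finset.inf' (Finset.range (n + 1)) ⟨0, by simp⟩
      (fun j => if Δ j < ε then ε - Δ j else ε)) with hε'def
  have hε'pos : 0 < ε' := by
    refine lt_min hε ?_
    refine (Finset.lt_inf'_iff _).2 ?_
    intro j _
    split_ifs with h
    · linarith
    · exact hε
  have hε'ε : ε' ≤ ε := min_le_left _ _
  have hε'le : ∀ j, j ≤ n → Δ j < ε → ε' ≤ ε - Δ j := by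
    intro j hj hΔj
    have hmem : j ∈ Finset.range (n + 1) := Finset.mem_range.mpr (by omega)
    have h2 : Finset.inf' (Finset.range (n + 1)) ⟨0, by simp⟩
        (fun j => if Δ j < ε then ε - Δ j else ε) ≤ (if Δ j < ε then ε - Δ j else ε) :=
      Finset.inf'_le _ hmem
    rw [if_pos hΔj] at h2
    exact (min_le_right _ _).trans h2
  have hq'I : q + ε' ∈ Icc a b := ⟨by linarith, by linarith⟩
  have hq'D : q + ε' ∈ Icc q (q + ε') := ⟨by linarith, le_refl _⟩
  have hdich : ∀ j, j ≤ n → (∀ u ∈ Icc q (q + ε'), Ssum f j u = Ssum f j q)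
      ∨ (∀ u ∈ Icc q (q + ε'), Ssum f j u = Ssum f j q + (u - q)) := by
    intro j hj
    have hδ : Ssum f j (q + ε) - Ssum f j q = Δ j := rfl
    by_cases hc : Δ j < ε
    · left
      intro u hu
      have hle := hε'le j hj hc
      rw [hident j hj u ⟨hu.1, hu.2.trans (by linarith)⟩,
        max_eq_left (by linarith [hu.2])]
    · right
      have hc' : Δ j = ε := le_antisymm (hΔε j) (not_lt.mp hc)
      intro u hu
      rw [hident j hj u ⟨hu.1, hu.2.trans (by linarith)⟩,
        max_eq_right (by linarith [hu.1])]
      linarith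
  set c : ℕ → ℝ := fun j => Ssum f j (q + ε') - Ssum f j q with hcdef
  have hdich2 : ∀ j, j ≤ n → (c j = 0 ∧ ∀ u ∈ Icc q (q + ε'), Ssum f j u = Ssum f j q)
      ∨ (c j = ε' ∧ ∀ u ∈ Icc q (q + ε'), Ssum f j u = Ssum f j q + (u - q)) := by
    intro j hj
    rcases hdich j hj with h | h
    · exact Or.inl ⟨by simp only [hcdef]; rw [h (q + ε') hq'D]; ring, h⟩
    · exact Or.inr ⟨by simp only [hcdef]; rw [h (q + ε') hq'D]; ring, h⟩
  have hcd : ∀ j, j ≤ n → c j = 0 ∨ c j = ε' := by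
    intro j hj
    rcases hdich2 j hj with ⟨h, -⟩ | ⟨h, -⟩
    · exact Or.inl h
    · exact Or.inr h
  have hc0 : c 0 = 0 := by simp only [hcdef]; rw [Ssum_zero, Ssum_zero]; ring
  have hcN : c n = ε' := by
    simp only [hcdef]
    rw [Ssum_all, Ssum_all, hsum _ hq'I, hsum _ hqIcc]
    ring
  have hcm : ∀ j, j + 1 ≤ n → c j ≤ c (j + 1) := by
    intro j hj
    have h1 := Ssum_succ f (by omega : j < n) (q + ε')
    have h2 := Ssum_succ f (by omega : j < n) q
    have h3 : f q ⟨j, by omega⟩ ≤ f (q + ε') ⟨j, by omega⟩ :=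
      hmono _ hqIcc hq'I (by linarith)
    simp only [hcdef]
    rw [h1, h2]
    linarith
  obtain ⟨K, hKn, hK0, hK1⟩ := pick_coord hn hε'pos hc0 hcN hcd hcm
  have hval : ∀ j, j ≤ n → ∀ v ∈ Icc q (q + ε'),
      Ssum f j v - Ssum f j q = (if c j = 0 then 0 else v - q) := by
    intro j hj v hv
    rcases hdich2 j hj with ⟨h0, h⟩ | ⟨h0, h⟩
    · rw [if_pos h0, h v hv]; ring
    · rw [if_neg (by rw [h0]; exact hε'pos.ne'), h v hv]; ring
  exact ⟨ε', hε'pos, by linarith, ⟨K, hKn⟩, assemble hε'pos hKn hK0 hK1 hval⟩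

lemma left_form {n : ℕ} (hn : 1 ≤ n) {a b : ℝ} {f : ℝ → Fin n → ℝ}
    (hcont : ContinuousOn f (Icc a b))
    (hmono : ∀ i, MonotoneOn (fun u => f u i) (Icc a b))
    (hsum : ∀ u ∈ Icc a b, ∑ i, f u i = u)
    (hcore : ∀ (j : ℕ) (hj : j + 1 < n), ∀ s t : ℝ, a ≤ s → s < t → t ≤ b →
      (∀ u ∈ Icc s t, f u ⟨j, Nat.lt_of_succ_lt hj⟩ < f u ⟨j + 1, hj⟩) →
      ∀ u ∈ Icc s t, Ssum f (j + 1) u = max (Ssum f (j + 1) s) (Ssum f (j + 1) t - (t - u)))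
    {E : Set ℝ} (hEfin : E.Finite)
    (hE : ∀ u ∈ Icc a b, u ∉ E → ∀ i i' : Fin n, i < i' → f u i < f u i')
    {q : ℝ} (haq : a < q) (hqb : q ≤ b) :
    ∃ ε > 0, a ≤ q - ε ∧ ∃ l : Fin n, ∀ v ∈ Icc (q - ε) q, f v = f q + Pi.single l (v - q) := by
  obtain ⟨ε, hε, hεa, hεE⟩ := avoid_left hEfin haq
  have hqIcc : q ∈ Icc a b := ⟨haq.le, hqb⟩
  have hqε : q - ε ∈ Icc a b := ⟨hεa, by linarith⟩
  have hsub : Icc (q - ε) q ⊆ Icc a b := Icc_subset_Icc hεa hqb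
  have hident : ∀ j, j ≤ n → ∀ u ∈ Icc (q - ε) q,
      Ssum f j u = max (Ssum f j (q - ε)) (Ssum f j q - (q - u)) := by
    intro j hjn u hu
    rcases Nat.eq_zero_or_pos j with rfl | hj0
    · rw [Ssum_zero, Ssum_zero, Ssum_zero, max_eq_left (by linarith [hu.2])]
    rcases eq_or_lt_of_le hjn with rfl | hjn'
    · have hid : ∀ v ∈ Icc a b, Ssum f j v = v := fun v hv => by
        rw [Ssum_all, hsum v hv]
      rw [hid u (hsub hu), hid q hqIcc, hid _ hqε, max_eq_right (by linarith [hu.1])]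
      ring
    · obtain ⟨j', rfl⟩ : ∃ j', j = j' + 1 := ⟨j - 1, by omega⟩
      refine ext_left ?_ ?_ ?_ u hu
      · exact ((S_cont_gen hcont _) q hqIcc).mono hsub
      · exact S_mono_gen hmono (j' + 1) hqε hqIcc (by linarith)
      · intro t ht u' hu'
        refine hcore j' hjn' (q - ε) t hεa ht.1 (by linarith [ht.2]) ?_ u' hu'
        intro v hv
        have hvab : v ∈ Icc a b := ⟨hεa.trans hv.1, (hv.2.trans ht.2.le).trans hqb⟩
        exact hE v hvab (hεE v hv.1 (lt_of_le_of_lt hv.2 ht.2)) _ _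
          (by rw [Fin.lt_def]; simp)
  set Δ : ℕ → ℝ := fun j => Ssum f j q - Ssum f j (q - ε) with hΔdef
  have hΔ0 : ∀ j, 0 ≤ Δ j := fun j => by
    have := S_mono_gen hmono j hqε hqIcc (by linarith)
    simp only [hΔdef]; linarith
  have hΔε : ∀ j, Δ j ≤ ε := fun j => by
    have := S_lip_gen hmono hsum j hqε hqIcc (by linarith)
    simp only [hΔdef]; linarith
  set ε' := min ε (Finset.inf' (Finset.range (n + 1)) ⟨0, by simp⟩
      (fun j => if 0 < Δ j then Δ j else ε)) with hε'def
  have hε'pos : 0 < ε' := by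
    refine lt_min hε ?_
    refine (Finset.lt_inf'_iff _).2 ?_
    intro j _
    split_ifs with h
    · exact h
    · exact hε
  have hε'ε : ε' ≤ ε := min_le_left _ _
  have hε'le : ∀ j, j ≤ n → 0 < Δ j → ε' ≤ Δ j := by
    intro j hj hΔj
    have hmem : j ∈ Finset.range (n + 1) := Finset.mem_range.mpr (by omega)
    have h2 : Finset.inf' (Finset.range (n + 1)) ⟨0, by simp⟩
        (fun j => if 0 < Δ j then Δ j else ε) ≤ (if 0 < Δ j then Δ j else ε) :=
      Finset.inf'_le _ hmem
    rw [if_pos hΔj] at h2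
    exact (min_le_right _ _).trans h2
  have hq'I : q - ε' ∈ Icc a b := ⟨by linarith, by linarith⟩
  have hq'D : q - ε' ∈ Icc (q - ε') q := ⟨le_refl _, by linarith⟩
  have hdich : ∀ j, j ≤ n → (∀ u ∈ Icc (q - ε') q, Ssum f j u = Ssum f j q)
      ∨ (∀ u ∈ Icc (q - ε') q, Ssum f j u = Ssum f j q + (u - q)) := by
    intro j hj
    have hδ : Ssum f j q - Ssum f j (q - ε) = Δ j := rfl
    by_cases hc : 0 < Δ j
    · right
      intro u hu
      have hle := hε'le j hj hc
      have hu' : u ∈ Icc (q - ε) q := ⟨by linarith [hu.1], hu.2⟩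
      rw [hident j hj u hu', max_eq_right (by linarith [hu.1])]
      ring
    · left
      have hc' : Δ j = 0 := le_antisymm (not_lt.mp hc) (hΔ0 j)
      intro u hu
      have hu' : u ∈ Icc (q - ε) q := ⟨by linarith [hu.1], hu.2⟩
      rw [hident j hj u hu', max_eq_left (by linarith [hu.2])]
      linarith
  set c : ℕ → ℝ := fun j => Ssum f j q - Ssum f j (q - ε') with hcdef
  have hdich2 : ∀ j, j ≤ n → (c j = 0 ∧ ∀ u ∈ Icc (q - ε') q, Ssum f j u = Ssum f j q)
      ∨ (c j = ε' ∧ ∀ u ∈ Icc (q - ε') q, Ssum f j u = Ssum f j q + (u - q)) := by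
    intro j hj
    rcases hdich j hj with h | h
    · exact Or.inl ⟨by simp only [hcdef]; rw [h (q - ε') hq'D]; ring, h⟩
    · exact Or.inr ⟨by simp only [hcdef]; rw [h (q - ε') hq'D]; ring, h⟩
  have hcd : ∀ j, j ≤ n → c j = 0 ∨ c j = ε' := by
    intro j hj
    rcases hdich2 j hj with ⟨h, -⟩ | ⟨h, -⟩
    · exact Or.inl h
    · exact Or.inr h
  have hc0 : c 0 = 0 := by simp only [hcdef]; rw [Ssum_zero, Ssum_zero]; ring
  have hcN : c n = ε' := by
    simp only [hcdef]
    rw [Ssum_all, Ssum_all, hsum _ hqIcc, hsum _ hq'I]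
    ring
  have hcm : ∀ j, j + 1 ≤ n → c j ≤ c (j + 1) := by
    intro j hj
    have h1 := Ssum_succ f (by omega : j < n) (q - ε')
    have h2 := Ssum_succ f (by omega : j < n) q
    have h3 : f (q - ε') ⟨j, by omega⟩ ≤ f q ⟨j, by omega⟩ :=
      hmono _ hq'I hqIcc (by linarith)
    simp only [hcdef]
    rw [h1, h2]
    linarith
  obtain ⟨K, hKn, hK0, hK1⟩ := pick_coord hn hε'pos hc0 hcN hcd hcm
  have hval : ∀ j, j ≤ n → ∀ v ∈ Icc (q - ε') q,
      Ssum f j v - Ssum f j q = (if c j = 0 then 0 else v - q) := by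
    intro j hj v hv
    rcases hdich2 j hj with ⟨h0, h⟩ | ⟨h0, h⟩
    · rw [if_pos h0, h v hv]; ring
    · rw [if_neg (by rw [h0]; exact hε'pos.ne'), h v hv]; ring
  exact ⟨ε', hε'pos, by linarith, ⟨K, hKn⟩, assemble hε'pos hKn hK0 hK1 hval⟩

open Topology in
theorem stmt_19 (n : ℕ) (hn : 2 ≤ n) (a b : ℝ) (ha : 0 < a) (hab : a < b)
    (P : ℕ → ℝ → Fin n → ℝ) (hP : ∀ k, IsNSystem n (Icc a b) (P k)) :
    ∃ φ : ℕ → ℕ, StrictMono φ ∧ ∃ f : ℝ → Fin n → ℝ,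
      TendstoUniformlyOn (fun k => P (φ k)) f atTop (Icc a b) ∧
      ContinuousOn f (Icc a b) ∧
      -- (i)
      (∀ i : Fin n, MonotoneOn (fun t => f t i) (Icc a b) ∧
        LipschitzOnWith 1 (fun t => f t i) (Icc a b)) ∧
      -- (ii)
      (∀ t ∈ Icc a b, (∀ i, 0 ≤ f t i) ∧ Monotone (f t) ∧ (∑ i, f t i) = t) ∧
      -- (iii)
      (∀ j : ℕ, ∀ hj : j + 1 < n,
        (∀ t ∈ Ioo a b, f t ⟨j, Nat.lt_of_succ_lt hj⟩ < f t ⟨j + 1, hj⟩) →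
        ConvexOn ℝ (Icc a b)
          (fun t => ∑ i : Fin n, if (i : ℕ) ≤ j then f t i else 0) ∧
        ∃ c ∈ Icc a b,
          (∀ t ∈ Icc a c, (∑ i : Fin n, if (i : ℕ) ≤ j then f t i else 0) =
              ∑ i : Fin n, if (i : ℕ) ≤ j then f a i else 0) ∧
          (∀ t ∈ Icc c b, (∑ i : Fin n, if (i : ℕ) ≤ j then f t i else 0) =
              (∑ i : Fin n, if (i : ℕ) ≤ j then f c i else 0) + (t - c))) ∧
      -- (iv)
      ({t ∈ Icc a b | ¬StrictMono (f t)}.Finite → IsNSystem n (Icc a b) f) := by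
  have hn1 : 1 ≤ n := by omega
  obtain ⟨φ, hφ, f, hconv, hcont⟩ := ns_extract ha.le hab P hP
  have haI : a ∈ Icc a b := ⟨le_refl a, hab.le⟩
  have hbI : b ∈ Icc a b := ⟨hab.le, le_refl b⟩
  have hpti : ∀ x ∈ Icc a b, ∀ i, Tendsto (fun k => P (φ k) x i) atTop (𝓝 (f x i)) := by
    intro x hx i
    exact ((continuous_apply i).tendsto (f x)).comp (hconv.tendsto_at hx)
  have hmono : ∀ i, MonotoneOn (fun u => f u i) (Icc a b) := by
    intro i x hx y hy hxy
    exact le_of_tendsto_of_tendsto' (hpti x hx i) (hpti y hy i)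
      (fun k => ns_mono' (hP (φ k)) i hx hy hxy)
  have hrev : ∀ (i : Fin n), ∀ x ∈ Icc a b, ∀ y ∈ Icc a b, x ≤ y →
      f y i ≤ f x i + (y - x) := by
    intro i x hx y hy hxy
    exact le_of_tendsto_of_tendsto' (hpti y hy i)
      ((hpti x hx i).add tendsto_const_nhds)
      (fun k => ns_rev' (hP (φ k)) i hx hy hxy)
  have hLip : ∀ i, LipschitzOnWith 1 (fun u => f u i) (Icc a b) := by
    intro i
    rw [lipschitzOnWith_iff_dist_le_mul]
    intro x hx y hy
    rw [NNReal.coe_one, one_mul, Real.dist_eq, Real.dist_eq]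
    rcases le_total x y with h | h
    · have h1 : f x i ≤ f y i := hmono i hx hy h
      have h2 := hrev i x hx y hy h
      have h3 : |x - y| = y - x := by rw [abs_of_nonpos (by linarith)]; ring
      rw [h3, abs_le]
      constructor <;> linarith
    · have h1 : f y i ≤ f x i := hmono i hy hx h
      have h2 := hrev i y hy x hx h
      have h3 : |x - y| = x - y := abs_of_nonneg (by linarith)
      rw [h3, abs_le]
      constructor <;> linarith
  have hii : ∀ t ∈ Icc a b, (∀ i, 0 ≤ f t i) ∧ Monotone (f t) ∧ (∑ i, f t i) = t := by
    intro t ht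
    refine ⟨?_, ?_, ?_⟩
    · intro i
      exact ge_of_tendsto (hpti t ht i)
        (Eventually.of_forall fun k => ((hP (φ k)) t ht).1.1 i)
    · intro i i' hii'
      exact le_of_tendsto_of_tendsto' (hpti t ht i) (hpti t ht i')
        (fun k => ((hP (φ k)) t ht).1.2.1 hii')
    · have h1 : Tendsto (fun k => ∑ i, P (φ k) t i) atTop (𝓝 (∑ i, f t i)) :=
        tendsto_finset_sum _ (fun i _ => hpti t ht i)
      have h2 : (fun k => ∑ i, P (φ k) t i) = fun _ => t :=
        funext fun k => ((hP (φ k)) t ht).1.2.2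
      rw [h2] at h1
      exact tendsto_nhds_unique h1 tendsto_const_nhds
  have hsum : ∀ u ∈ Icc a b, ∑ i, f u i = u := fun u hu => (hii u hu).2.2
  -- core max identity for the limit
  have hcore : ∀ (j : ℕ) (hj : j + 1 < n), ∀ s t : ℝ, a ≤ s → s < t → t ≤ b →
      (∀ u ∈ Icc s t, f u ⟨j, Nat.lt_of_succ_lt hj⟩ < f u ⟨j + 1, hj⟩) →
      ∀ u ∈ Icc s t, Ssum f (j + 1) u
        = max (Ssum f (j + 1) s) (Ssum f (j + 1) t - (t - u)) := by
    intro j hj s t has hst htb hpos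
    have hsub : Icc s t ⊆ Icc a b := Icc_subset_Icc has htb
    set g : ℝ → ℝ := fun u => f u ⟨j + 1, hj⟩ - f u ⟨j, Nat.lt_of_succ_lt hj⟩ with hg
    have hgc : ContinuousOn g (Icc s t) :=
      ((continuous_apply _).comp_continuousOn (hcont.mono hsub)).sub
        ((continuous_apply _).comp_continuousOn (hcont.mono hsub))
    obtain ⟨x0, hx0, hmin⟩ :=
      isCompact_Icc.exists_isMinOn (nonempty_Icc.mpr hst.le) hgc
    have hδpos : 0 < g x0 := sub_pos.mpr (hpos x0 hx0)
    have hev : ∀ᶠ k in atTop, ∀ u ∈ Icc s t,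
        P (φ k) u ⟨j, Nat.lt_of_succ_lt hj⟩ < P (φ k) u ⟨j + 1, hj⟩ := by
      have h1 := (Metric.tendstoUniformlyOn_iff.mp hconv) (g x0 / 2) (half_pos hδpos)
      filter_upwards [h1] with k hk u hu
      have h2 := hk u (hsub hu)
      have h3 : dist (f u ⟨j, Nat.lt_of_succ_lt hj⟩) (P (φ k) u ⟨j, Nat.lt_of_succ_lt hj⟩)
          < g x0 / 2 := lt_of_le_of_lt (dist_le_pi_dist _ _ _) h2
      have h4 : dist (f u ⟨j + 1, hj⟩) (P (φ k) u ⟨j + 1, hj⟩) < g x0 / 2 :=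
        lt_of_le_of_lt (dist_le_pi_dist _ _ _) h2
      have h5 : g x0 ≤ g u := (isMinOn_iff.mp hmin) u hu
      rw [Real.dist_eq, abs_lt] at h3 h4
      simp only [hg] at h5
      linarith [h3.1, h3.2, h4.1, h4.2]
    intro u hu
    have hevk : ∀ᶠ k in atTop, Ssum (P (φ k)) (j + 1) u
        = max (Ssum (P (φ k)) (j + 1) s) (Ssum (P (φ k)) (j + 1) t - (t - u)) := by
      filter_upwards [hev] with k hk
      exact ns_max_id (hP (φ k)) hj has htb hst.le hk u hu
    have hT1 : Tendsto (fun k => Ssum (P (φ k)) (j + 1) u) atTop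
        (𝓝 (Ssum f (j + 1) u)) := S_tendsto (hpti u (hsub hu)) _
    have hT2 : Tendsto (fun k => max (Ssum (P (φ k)) (j + 1) s)
          (Ssum (P (φ k)) (j + 1) t - (t - u))) atTop
        (𝓝 (max (Ssum f (j + 1) s) (Ssum f (j + 1) t - (t - u)))) :=
      (S_tendsto (hpti s (hsub ⟨le_refl s, hst.le⟩)) _).max
        ((S_tendsto (hpti t (hsub ⟨hst.le, le_refl t⟩)) _).sub tendsto_const_nhds)
    exact tendsto_nhds_unique ((tendsto_congr' hevk).mp hT1) hT2
  refine ⟨φ, hφ, f, hconv, hcont, fun i => ⟨hmono i, hLip i⟩, hii, ?_, ?_⟩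
  · -- (iii)
    intro j hj hstrict
    have hrw : ∀ u : ℝ, (∑ i : Fin n, if (i : ℕ) ≤ j then f u i else 0)
        = Ssum f (j + 1) u := by
      intro u
      unfold Ssum
      exact Finset.sum_congr rfl (fun i _ => if_congr Nat.lt_succ_iff.symm rfl rfl)
    have hmid : ∀ s ∈ Ioo a b, ∀ u ∈ Icc s b, Ssum f (j + 1) u
        = max (Ssum f (j + 1) s) (Ssum f (j + 1) b - (b - u)) := by
      intro s hs
      refine ext_left ?_ ?_ ?_
      · exact ((S_cont_gen hcont _) b hbI).mono (Icc_subset_Icc hs.1.le (le_refl b))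
      · exact S_mono_gen hmono _ ⟨hs.1.le, hs.2.le⟩ hbI hs.2.le
      · intro t ht u hu
        refine hcore j hj s t hs.1.le ht.1 ht.2.le ?_ u hu
        intro v hv
        exact hstrict v ⟨lt_of_lt_of_le hs.1 hv.1, lt_of_le_of_lt hv.2 ht.2⟩
    have hfull : ∀ u ∈ Icc a b, Ssum f (j + 1) u
        = max (Ssum f (j + 1) a) (Ssum f (j + 1) b - (b - u)) := by
      refine ext_right ?_ ?_ ?_
      · exact (S_cont_gen hcont _) a haI
      · have := S_lip_gen hmono hsum (j + 1) haI hbI hab.le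
        linarith
      · exact hmid
    constructor
    · have hcv : ConvexOn ℝ (Icc a b)
          ((fun _ : ℝ => Ssum f (j + 1) a) ⊔ (id + fun _ : ℝ => Ssum f (j + 1) b - b)) :=
        (convexOn_const _ (convex_Icc a b)).sup
          ((convexOn_id (convex_Icc a b)).add
            (convexOn_const _ (convex_Icc a b)))
      refine hcv.congr ?_
      intro u hu
      simp only [Pi.sup_apply, Pi.add_apply, id_eq]
      rw [hrw u, hfull u hu]
      show max _ _ = max _ _
      congr 1
      ring
    · have hFab : Ssum f (j + 1) a ≤ Ssum f (j + 1) b := S_mono_gen hmono _ haI hbI hab.le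
      have hFlip : Ssum f (j + 1) b ≤ Ssum f (j + 1) a + (b - a) :=
        S_lip_gen hmono hsum _ haI hbI hab.le
      set c := b - (Ssum f (j + 1) b - Ssum f (j + 1) a) with hc
      have hcI : c ∈ Icc a b := ⟨by linarith, by linarith⟩
      refine ⟨c, hcI, ?_, ?_⟩
      · intro t htc
        rw [hrw t, hrw a]
        have htI : t ∈ Icc a b := ⟨htc.1, htc.2.trans hcI.2⟩
        rw [hfull t htI, max_eq_left (by linarith [htc.2])]
      · intro t htc
        rw [hrw t, hrw c]
        have htI : t ∈ Icc a b := ⟨hcI.1.trans htc.1, htc.2⟩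
        rw [hfull t htI, hfull c hcI,
          max_eq_right (by linarith [htc.1] : Ssum f (j+1) a ≤ Ssum f (j+1) b - (b - t)),
          max_eq_right (by linarith : Ssum f (j+1) a ≤ Ssum f (j+1) b - (b - c))]
        ring
  · -- (iv)
    intro hfin
    have hEf : ∀ u ∈ Icc a b, u ∉ {t ∈ Icc a b | ¬StrictMono (f t)} →
        ∀ i i' : Fin n, i < i' → f u i < f u i' := by
      intro u hu huE i i' hii'
      by_cases hsm : StrictMono (f u)
      · exact hsm hii'
      · exact absurd (⟨hu, hsm⟩ : u ∈ {t ∈ Icc a b | ¬StrictMono (f t)}) huE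
    intro q hq
    refine ⟨hii q hq, ?_⟩
    rcases eq_or_lt_of_le hq.1 with haq | haq
    · -- q = a
      have hqb : q < b := by rw [← haq]; exact hab
      obtain ⟨εR, hεR, hεRb, k, hR⟩ :=
        right_form hn1 hcont hmono hsum hcore hfin hEf hq.1 hqb
      refine ⟨εR, hεR, k, k, ?_, ?_, ?_⟩
      · intro t ht
        have : t = q := le_antisymm ht.2.2 (haq ▸ ht.1.1)
        rw [this]
        simp
      · intro t ht
        exact hR t ht.2
      · intro hint _
        exfalso
        rw [interior_Icc] at hint
        rw [← haq] at hint
        exact lt_irrefl a hint.1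
    · rcases eq_or_lt_of_le hq.2 with hqb | hqb
      · -- q = b
        obtain ⟨εL, hεL, hεLa, l, hL⟩ :=
          left_form hn1 hcont hmono hsum hcore hfin hEf haq hq.2
        refine ⟨εL, hεL, l, l, ?_, ?_, ?_⟩
        · intro t ht
          exact hL t ht.2
        · intro t ht
          have : t = q := le_antisymm (hqb ▸ ht.1.2) ht.2.1
          rw [this]
          simp
        · intro _ hlk
          exact absurd hlk (lt_irrefl l)
      · -- interior
        obtain ⟨εR, hεR, hεRb, k, hR⟩ :=
          right_form hn1 hcont hmono hsum hcore hfin hEf hq.1 hqb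
        obtain ⟨εL, hεL, hεLa, l, hL⟩ :=
          left_form hn1 hcont hmono hsum hcore hfin hEf haq hq.2
        refine ⟨min εR εL, lt_min hεR hεL, k, l, ?_, ?_, ?_⟩
        · intro t ht
          exact hL t ⟨by linarith [ht.2.1, min_le_right εR εL], ht.2.2⟩
        · intro t ht
          exact hR t ⟨ht.2.1, by linarith [ht.2.2, min_le_left εR εL]⟩
        · intro _ hlk
          have hlkn : (l : ℕ) < (k : ℕ) := Fin.lt_def.mp hlk
          have hpair : ∀ (m : ℕ) (hm1 : m + 1 < n), (l : ℕ) ≤ m → m + 1 ≤ (k : ℕ) →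
              f q ⟨m, Nat.lt_of_succ_lt hm1⟩ = f q ⟨m + 1, hm1⟩ := by
            intro m hm1 hlm hmk
            by_contra hne
            have hlt : f q ⟨m, Nat.lt_of_succ_lt hm1⟩ < f q ⟨m + 1, hm1⟩ :=
              lt_of_le_of_ne ((hii q hq).2.1 (by rw [Fin.le_def]; simp)) hne
            set g2 : ℝ → ℝ := fun u => f u ⟨m + 1, hm1⟩ - f u ⟨m, Nat.lt_of_succ_lt hm1⟩
              with hg2
            have hg2c : ContinuousWithinAt g2 (Icc a b) q :=
              (((continuous_apply _).comp_continuousOn hcont).sub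
                ((continuous_apply _).comp_continuousOn hcont)) q hq
            have hev : ∀ᶠ u in 𝓝[Icc a b] q, 0 < g2 u :=
              hg2c.eventually (eventually_gt_nhds (sub_pos.mpr hlt))
            obtain ⟨ρ0, hρ0, hρsub⟩ := Metric.mem_nhdsWithin_iff.mp hev
            set ρ := min (ρ0 / 2) (min (q - a) (b - q)) with hρ
            have hρpos : 0 < ρ :=
              lt_min (by linarith) (lt_min (by linarith) (by linarith))
            have hρ1 : ρ ≤ ρ0 / 2 := min_le_left _ _
            have hρ2 : ρ ≤ q - a := (min_le_right _ _).trans (min_le_left _ _)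
            have hρ3 : ρ ≤ b - q := (min_le_right _ _).trans (min_le_right _ _)
            have hpos : ∀ u ∈ Icc (q - ρ) (q + ρ),
                f u ⟨m, Nat.lt_of_succ_lt hm1⟩ < f u ⟨m + 1, hm1⟩ := by
              intro u hu
              have hmem : u ∈ Metric.ball q ρ0 ∩ Icc a b := by
                constructor
                · rw [Metric.mem_ball, Real.dist_eq, abs_lt]
                  constructor <;> [linarith [hu.1]; linarith [hu.2]]
                · exact ⟨by linarith [hu.1], by linarith [hu.2]⟩
              have := hρsub hmem
              simp only [Set.mem_setOf_eq, hg2] at this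
              linarith
            have hid := hcore m hm1 (q - ρ) (q + ρ) (by linarith) (by linarith)
              (by linarith) hpos
            set ε3 := min ρ εL with hε3
            set ε4 := min ρ εR with hε4
            have hε3pos : 0 < ε3 := lt_min hρpos hεL
            have hε4pos : 0 < ε4 := lt_min hρpos hεR
            refine max_no_drop hid hε3pos hε4pos
              (by linarith [min_le_left ρ εL] : q - ρ ≤ q - ε3)
              (by linarith [min_le_left ρ εR] : q + ε4 ≤ q + ρ) ?_ ?_
            · have hv : (q - ε3) ∈ Icc (q - εL) q :=
                ⟨by linarith [min_le_right ρ εL], by linarith⟩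
              have hS := Ssum_single (m := m + 1) (hL (q - ε3) hv)
              rw [if_pos (by omega : (l : ℕ) < m + 1)] at hS
              linarith
            · have hv : (q + ε4) ∈ Icc q (q + εR) :=
                ⟨by linarith, by linarith [min_le_right ρ εR]⟩
              have hS := Ssum_single (m := m + 1) (hR (q + ε4) hv)
              rw [if_neg (by omega : ¬(k : ℕ) < m + 1)] at hS
              linarith
          have hchain : ∀ d : ℕ, ∀ hd : (l : ℕ) + d < n, ((l : ℕ) + d ≤ (k : ℕ)) →
              f q ⟨(l : ℕ) + d, hd⟩ = f q l := by
            intro d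
            induction d with
            | zero =>
              intro hd _
              have he : (⟨(l : ℕ) + 0, hd⟩ : Fin n) = l := Fin.ext (by simp)
              rw [he]
            | succ m2 ih =>
              intro hd hdk
              have hm1 : (l : ℕ) + m2 + 1 < n := by omega
              calc f q ⟨(l : ℕ) + (m2 + 1), hd⟩
                  = f q ⟨(l : ℕ) + m2 + 1, hm1⟩ := by congr 1
                _ = f q ⟨(l : ℕ) + m2, Nat.lt_of_succ_lt hm1⟩ :=
                    (hpair ((l : ℕ) + m2) hm1 (by omega) (by omega)).symm
                _ = f q l := ih (by omega) (by omega)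
          intro i hli hik
          have hlin : (l : ℕ) ≤ (i : ℕ) := Fin.le_def.mp hli
          have hikn : (i : ℕ) ≤ (k : ℕ) := Fin.le_def.mp hik
          have h1 := hchain ((i : ℕ) - (l : ℕ)) (by omega) (by omega)
          have h2 : (⟨(l : ℕ) + ((i : ℕ) - (l : ℕ)), by omega⟩ : Fin n) = i :=
            Fin.ext (by simp; omega)
          rw [h2] at h1
          exact h1
end
end
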